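/- arXiv:1006.1974 — 3 statements merged into one kernel-verified Lean document; each statement's English description precedes it below -/
import Mathlib

section
/- Let d ≥ 1 and let i, j be natural numbers with j ≤ d·i and d·i − j even. Then the dimension of the space of semi-invariants of degree i and order j of the binary d-form satisfies γ_d(i,j) = ω_d(i, (d·i−j)/2) − ω_d(i, (d·i−j)/2 − 1); that is, dim_ℂ (W_{i,(d·i−j)/2} ∩ ker D₁) = ω_d(i, (d·i−j)/2) − ω_d(i, (d·i−j−2)/2). -/
/-!
The raising operator `D₁` and the lowering operator `F`, `F x_k = (d - k) x_{k+1}`, satisfy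
`[D₁, F] = H` with `H` acting on `W_{i,N}` by `d·i - 2N`, so the spaces `W_{i,N}` form the weight
spaces of an `sl₂`-module. By induction on `N`, every eigenvalue of `F ∘ D₁` on `W_{i,N}` with
`2N ≤ d·i` is a natural number; hence `D₁ ∘ F = F ∘ D₁ + (d·i - 2N)` is injective, so invertible, on
`W_{i,N}` as soon as `2(N + 1) ≤ d·i`. Thus `D₁ : W_{i,N+1} → W_{i,N}` is onto, and rank–nullity
together with `dim W_{i,N} = ω_d(i,N)` gives the formula.
-/

def omegaCount (d n : ℕ) (m : ℤ) : ℕ :=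
  ((Finset.Nat.antidiagonalTuple (d + 1) n).filter
    (fun α => (∑ k : Fin (d + 1), (k : ℤ) * (α k : ℤ)) = m)).card

noncomputable def Wspace (d i N : ℕ) : Submodule ℂ (MvPolynomial (Fin (d + 1)) ℂ) :=
  Submodule.span ℂ { p | ∃ α : Fin (d + 1) →₀ ℕ,
    (∑ k, α k) = i ∧ (∑ k : Fin (d + 1), (k : ℕ) * α k) = N ∧
    p = MvPolynomial.monomial α 1 }

noncomputable def D1 (d : ℕ) :
    Derivation ℂ (MvPolynomial (Fin (d + 1)) ℂ) (MvPolynomial (Fin (d + 1)) ℂ) :=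
  MvPolynomial.mkDerivation ℂ (fun k =>
    if _h : 0 < (k : ℕ) then
      ((k : ℕ) : ℂ) •
        MvPolynomial.X (⟨(k : ℕ) - 1, lt_of_le_of_lt (Nat.sub_le _ _) k.isLt⟩ : Fin (d + 1))
    else 0)

/-- `W N` plays the role of the weight space of weight `c - 2N` of an `sl₂`-module, with `E` the
raising and `F` the lowering operator. -/
structure IsSl2Grading {K V : Type*} [Field K] [AddCommGroup V] [Module K V]
    (W : ℕ → Submodule K V) (E F : V →ₗ[K] V) (c : ℕ) : Prop where
  le_comap_raise : ∀ N, W (N + 1) ≤ (W N).comap E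
  le_ker_raise : W 0 ≤ LinearMap.ker E
  le_comap_lower : ∀ N, W N ≤ (W (N + 1)).comap F
  lie : ∀ N, ∀ v ∈ W N, E (F v) - F (E v) = ((c : K) - 2 * N) • v

namespace IsSl2Grading

variable {K V : Type*} [Field K] [AddCommGroup V] [Module K V]
  {W : ℕ → Submodule K V} {E F : V →ₗ[K] V} {c : ℕ}

theorem exists_nat_eq_of_lower_raise_eq_smul (h : IsSl2Grading W E F c) {N : ℕ}
    (hN : 2 * N ≤ c) {v : V} (hv : v ∈ W N) (hv0 : v ≠ 0) {μ : K} (hμ : F (E v) = μ • v) :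
    ∃ n : ℕ, μ = n := by
  induction N generalizing v μ with
  | zero =>
    rw [LinearMap.mem_ker.1 (h.le_ker_raise hv), map_zero, eq_comm, smul_eq_zero] at hμ
    exact ⟨0, by simpa [hv0] using hμ⟩
  | succ N ih =>
    by_cases hEv : E v = 0
    · rw [hEv, map_zero, eq_comm, smul_eq_zero] at hμ
      exact ⟨0, by simpa [hv0] using hμ⟩
    have hEvW := h.le_comap_raise N hv
    have hshift : F (E (E v)) = (μ - ((c : K) - 2 * N)) • E v := by
      rw [sub_smul, ← h.lie N _ hEvW, hμ, map_smul]
      abel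
    obtain ⟨n, hn⟩ := ih (by omega) hEvW hEv hshift
    refine ⟨n + (c - 2 * N), ?_⟩
    push_cast [show 2 * N ≤ c by omega]
    linear_combination hn

theorem map_raise (h : IsSl2Grading W E F c) [CharZero K] {N : ℕ} [FiniteDimensional K (W N)]
    (hN : 2 * (N + 1) ≤ c) : (W (N + 1)).map E = W N := by
  refine le_antisymm (Submodule.map_le_iff_le_comap.2 (h.le_comap_raise N)) fun x hx => ?_
  have hmaps : ∀ v ∈ W N, (E ∘ₗ F) v ∈ W N := fun v hv =>
    h.le_comap_raise N (h.le_comap_lower N hv)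
  have hinj : Function.Injective ((E ∘ₗ F).restrict hmaps) := by
    rw [← LinearMap.ker_eq_bot, Submodule.eq_bot_iff]
    rintro ⟨v, hv⟩ hker
    by_contra hv0
    have hEF : E (F v) = 0 := congrArg Subtype.val hker
    have hFE : F (E v) = (-((c : K) - 2 * N)) • v := by
      rw [neg_smul, ← h.lie N v hv, hEF, zero_sub, neg_neg]
    obtain ⟨n, hn⟩ := h.exists_nat_eq_of_lower_raise_eq_smul (by omega) hv
      (fun h0 => hv0 (Subtype.ext h0)) hFE
    have : ((n + (c - 2 * N) : ℕ) : K) = 0 := by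
      push_cast [show 2 * N ≤ c by omega]
      linear_combination -hn
    have := Nat.cast_eq_zero.1 this
    omega
  obtain ⟨y, hy⟩ := LinearMap.injective_iff_surjective.1 hinj ⟨x, hx⟩
  exact ⟨F y, h.le_comap_lower N y.2, congrArg Subtype.val hy⟩

theorem finrank_inf_ker_add_finrank (h : IsSl2Grading W E F c) [CharZero K] {N : ℕ}
    [FiniteDimensional K (W N)] [FiniteDimensional K (W (N + 1))] (hN : 2 * (N + 1) ≤ c) :
    Module.finrank K ↥(W (N + 1) ⊓ LinearMap.ker E) + Module.finrank K (W N)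
      = Module.finrank K (W (N + 1)) := by
  have hrange : LinearMap.range (E.domRestrict (W (N + 1))) = W N := by
    rw [LinearMap.range_domRestrict, h.map_raise hN]
  have hker : Module.finrank K (LinearMap.ker (E.domRestrict (W (N + 1))))
      = Module.finrank K ↥(W (N + 1) ⊓ LinearMap.ker E) := by
    rw [LinearMap.ker_domRestrict, ← (Submodule.comapSubtypeEquivOfLe
        (inf_le_left : W (N + 1) ⊓ LinearMap.ker E ≤ _)).finrank_eq, Submodule.comap_inf, Submodule.comap_subtype_self, top_inf_eq]
  rw [← hker, ← hrange, add_comm]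
  exact (E.domRestrict (W (N + 1))).finrank_range_add_finrank_ker

end IsSl2Grading

open MvPolynomial Finsupp

section
variable {σ R M : Type*} [CommSemiring R]

theorem map_tsub_single_add_single [AddCommMonoid M] (φ : (σ →₀ ℕ) →+ M) {α : σ →₀ ℕ} {k : σ}
    (hk : α k ≠ 0) (k' : σ) :
    φ (α - single k 1 + single k' 1) + φ (single k 1) = φ α + φ (single k' 1) := by
  rw [← map_add, ← map_add, add_right_comm,
    tsub_add_cancel_of_le (single_le_iff.2 (Nat.one_le_iff_ne_zero.2 hk))]

theorem restrictSupport_le_iff {s : Set (σ →₀ ℕ)} {P : Submodule R (MvPolynomial σ R)} :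
    restrictSupport R s ≤ P ↔ ∀ α ∈ s, monomial α 1 ∈ P := by
  rw [restrictSupport_eq_span, Submodule.span_le, Set.image_subset_iff]
  rfl

theorem derivation_monomial_mem (D : Derivation R (MvPolynomial σ R) (MvPolynomial σ R))
    {α : σ →₀ ℕ} {P : Submodule R (MvPolynomial σ R)}
    (h : ∀ k, α k ≠ 0 → monomial (α - single k 1) 1 * D (X k) ∈ P) : D (monomial α 1) ∈ P := by
  have hD : D = mkDerivation R fun k => D (X k) :=
    derivation_ext fun k => (mkDerivation_X R (fun k => D (X k)) k).symm
  rw [hD, mkDerivation_monomial, one_smul]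
  refine Submodule.sum_mem _ fun k hk => ?_
  have hterm : monomial (α - single k 1) (α k : R) • D (X k)
      = (α k : R) • (monomial (α - single k 1) 1 * D (X k)) := by
    rw [smul_eq_mul, ← smul_mul_assoc, smul_monomial, smul_eq_mul, mul_one]
  dsimp only
  exact hterm ▸ P.smul_mem _ (h k (mem_support_iff.1 hk))

theorem mkDerivation_smul_X_monomial (w : σ → R) (α : σ →₀ ℕ) :
    mkDerivation R (fun k => w k • X k) (monomial α 1) = weight w α • monomial α (1 : R) := by
  rw [mkDerivation_monomial, one_smul, weight_apply, Finsupp.sum, Finsupp.sum, Finset.sum_smul]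
  refine Finset.sum_congr rfl fun k hk => ?_
  rw [smul_comm, smul_eq_mul, X, monomial_mul, mul_one,
    tsub_add_cancel_of_le (single_le_iff.2 (Nat.one_le_iff_ne_zero.2 (mem_support_iff.1 hk))),
    smul_monomial, smul_monomial, smul_eq_mul, nsmul_eq_mul, smul_eq_mul, mul_one, mul_comm]

end

theorem weight_val_eq_sum {d : ℕ} (α : Fin (d + 1) →₀ ℕ) :
    weight (fun k : Fin (d + 1) => (k : ℕ)) α = ∑ k : Fin (d + 1), (k : ℕ) * α k := by
  simp only [weight_eq_sum, smul_eq_mul, mul_comm]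

def expSet (d i N : ℕ) : Set (Fin (d + 1) →₀ ℕ) :=
  {α | degree α = i ∧ weight (fun k : Fin (d + 1) => (k : ℕ)) α = N}

theorem Wspace_eq_restrictSupport (d i N : ℕ) :
    Wspace d i N = restrictSupport ℂ (expSet d i N) := by
  rw [Wspace, restrictSupport_eq_span]
  congr 1
  ext p
  simp only [expSet, Set.mem_ofPred_eq, Set.mem_image, degree_eq_sum, weight_val_eq_sum]
  aesop

theorem expSet_eq_coe_finset (d i N : ℕ) :
    expSet d i N = ↑(((Finset.Nat.antidiagonalTuple (d + 1) i).filter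
      (fun α => (∑ k : Fin (d + 1), (k : ℤ) * (α k : ℤ)) = N)).map
        equivFunOnFinite.symm.toEmbedding) := by
  ext α
  simp only [expSet, Set.mem_ofPred_eq, Finset.coe_map, Set.mem_image, Finset.mem_coe,
    Finset.mem_filter, Finset.Nat.mem_antidiagonalTuple, degree_eq_sum, weight_val_eq_sum]
  constructor
  · rintro ⟨h1, h2⟩
    exact ⟨α, ⟨h1, by exact_mod_cast h2⟩, by simp⟩
  · rintro ⟨f, ⟨h1, h2⟩, rfl⟩
    exact ⟨h1, by exact_mod_cast h2⟩

instance (d i N : ℕ) : Finite (expSet d i N) := by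
  rw [expSet_eq_coe_finset]
  infer_instance

theorem natCard_expSet (d i N : ℕ) : Nat.card (expSet d i N) = omegaCount d i N := by
  rw [expSet_eq_coe_finset, Nat.card_coe_set_eq, Set.ncard_coe_finset, Finset.card_map]
  rfl

instance (d i N : ℕ) : FiniteDimensional ℂ (Wspace d i N) := by
  rw [Wspace_eq_restrictSupport]
  exact Module.Finite.of_basis (basisRestrictSupport ℂ _)

theorem finrank_Wspace (d i N : ℕ) : Module.finrank ℂ (Wspace d i N) = omegaCount d i N := by
  rw [Wspace_eq_restrictSupport, Module.finrank_eq_nat_card_basis (basisRestrictSupport ℂ _),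
    natCard_expSet]

theorem omegaCount_of_neg (d n : ℕ) {m : ℤ} (hm : m < 0) : omegaCount d n m = 0 := by
  refine Finset.card_eq_zero.2 (Finset.filter_eq_empty_iff.2 fun α _ hα => hm.not_ge ?_)
  rw [← hα]
  positivity

theorem monomial_tsub_single_mul_X_mem_Wspace {d i N M : ℕ} {α : Fin (d + 1) →₀ ℕ}
    (hα : α ∈ expSet d i N) {k k' : Fin (d + 1)} (hk : α k ≠ 0) (hNM : N + k' = M + k) :
    monomial (α - single k 1) 1 * X k' ∈ Wspace d i M := by
  have hdeg := map_tsub_single_add_single degree hk k'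
  have hwt := map_tsub_single_add_single (weight fun k : Fin (d + 1) => (k : ℕ)) hk k'
  simp only [degree_single, weight_single, smul_eq_mul, one_mul] at hdeg hwt
  rw [X, monomial_mul, one_mul, Wspace_eq_restrictSupport, monomial_mem_restrictSupport]
  obtain ⟨hαdeg, hαwt⟩ := hα
  exact .inl ⟨by omega, by omega⟩

theorem D1_X_zero (d : ℕ) : D1 d (X 0) = 0 := by
  simp [D1, mkDerivation_X]

theorem D1_X_succ {d : ℕ} (k : Fin d) : D1 d (X k.succ) = ((k : ℂ) + 1) • X k.castSucc := by
  rw [D1, mkDerivation_X, dif_pos (show 0 < (k.succ : ℕ) from Nat.succ_pos k)]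
  congr 1
  simp

noncomputable def lowerD (d : ℕ) :
    Derivation ℂ (MvPolynomial (Fin (d + 1)) ℂ) (MvPolynomial (Fin (d + 1)) ℂ) :=
  mkDerivation ℂ (Fin.lastCases 0 fun k => ((d : ℂ) - k) • X k.succ)

theorem lowerD_X_last (d : ℕ) : lowerD d (X (Fin.last d)) = 0 := by
  simp [lowerD, mkDerivation_X]

theorem lowerD_X_castSucc {d : ℕ} (k : Fin d) :
    lowerD d (X k.castSucc) = ((d : ℂ) - k) • X k.succ := by
  simp [lowerD, mkDerivation_X]

noncomputable def weightD (d : ℕ) :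
    Derivation ℂ (MvPolynomial (Fin (d + 1)) ℂ) (MvPolynomial (Fin (d + 1)) ℂ) :=
  mkDerivation ℂ fun k => ((d : ℂ) - 2 * (k : ℕ)) • X k

theorem D1_lowerD_X {d : ℕ} (k : Fin (d + 1)) :
    D1 d (lowerD d (X k)) = (((k : ℕ) + 1) * ((d : ℂ) - (k : ℕ))) • X k := by
  induction k using Fin.lastCases with
  | last => simp [lowerD_X_last]
  | cast k =>
    rw [lowerD_X_castSucc, Derivation.map_smul, D1_X_succ, smul_smul, Fin.val_castSucc, mul_comm]

theorem lowerD_D1_X {d : ℕ} (k : Fin (d + 1)) :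
    lowerD d (D1 d (X k)) = ((k : ℕ) * ((d : ℂ) - (k : ℕ) + 1)) • X k := by
  induction k using Fin.cases with
  | zero => simp [D1_X_zero]
  | succ k =>
    rw [D1_X_succ, Derivation.map_smul, lowerD_X_castSucc, smul_smul, Fin.val_succ]
    congr 1
    push_cast
    ring

theorem commutator_D1_lowerD (d : ℕ) : ⁅D1 d, lowerD d⁆ = weightD d := by
  refine derivation_ext fun k => ?_
  rw [Derivation.commutator_apply, D1_lowerD_X, lowerD_D1_X, weightD, mkDerivation_X, ← sub_smul]
  congr 1
  ring

theorem weightD_eq_smul_of_mem_Wspace {d i N : ℕ} {v : MvPolynomial (Fin (d + 1)) ℂ}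
    (hv : v ∈ Wspace d i N) : weightD d v = ((d : ℂ) * i - 2 * N) • v := by
  suffices Wspace d i N ≤ LinearMap.ker ((weightD d).toLinearMap - ((d : ℂ) * i - 2 * N) • 1) by
    simpa [sub_eq_zero] using this hv
  rw [Wspace_eq_restrictSupport, restrictSupport_le_iff]
  rintro α ⟨hdeg, hwt⟩
  rw [LinearMap.mem_ker, LinearMap.sub_apply, Derivation.coeFn_coe, weightD,
    mkDerivation_smul_X_monomial, LinearMap.smul_apply, Module.End.one_apply, sub_eq_zero]
  congr 1
  rw [degree_eq_sum] at hdeg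
  rw [weight_val_eq_sum] at hwt
  rw [weight_eq_sum, ← hdeg, ← hwt]
  push_cast
  simp only [nsmul_eq_mul, mul_sub, Finset.sum_sub_distrib, Finset.mul_sum]
  congr 1 <;> refine Finset.sum_congr rfl fun k _ => by ring

theorem isSl2Grading_Wspace (d i : ℕ) :
    IsSl2Grading (Wspace d i) (D1 d).toLinearMap (lowerD d).toLinearMap (d * i) where
  le_comap_raise N := by
    rw [Wspace_eq_restrictSupport d i (N + 1), restrictSupport_le_iff]
    refine fun α hα => Submodule.mem_comap.2 <| derivation_monomial_mem (D1 d) fun k hk => ?_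
    induction k using Fin.cases with
    | zero => simp [D1_X_zero]
    | succ k =>
      rw [D1_X_succ, mul_smul_comm]
      exact Submodule.smul_mem _ _ (monomial_tsub_single_mul_X_mem_Wspace hα hk
        (by rw [Fin.val_succ, Fin.val_castSucc]; omega))
  le_ker_raise := by
    rw [Wspace_eq_restrictSupport, restrictSupport_le_iff]
    refine fun α hα => LinearMap.mem_ker.2 <| (Submodule.mem_bot ℂ).1 <|
      derivation_monomial_mem (D1 d) fun k hk => ?_
    obtain ⟨-, hwt⟩ := hα
    rw [weight_val_eq_sum, Finset.sum_eq_zero_iff] at hwt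
    have hk0 : k = 0 := Fin.ext (by simpa [hk] using hwt k (Finset.mem_univ k))
    simp [hk0, D1_X_zero]
  le_comap_lower N := by
    rw [Wspace_eq_restrictSupport d i N, restrictSupport_le_iff]
    refine fun α hα => Submodule.mem_comap.2 <| derivation_monomial_mem (lowerD d) fun k hk => ?_
    induction k using Fin.lastCases with
    | last => simp [lowerD_X_last]
    | cast k =>
      rw [lowerD_X_castSucc, mul_smul_comm]
      exact Submodule.smul_mem _ _ (monomial_tsub_single_mul_X_mem_Wspace hα hk
        (by rw [Fin.val_succ, Fin.val_castSucc]; omega))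
  lie N v hv := by
    rw [Derivation.coeFn_coe, Derivation.coeFn_coe, ← Derivation.commutator_apply,
      commutator_D1_lowerD, weightD_eq_smul_of_mem_Wspace hv]
    push_cast
    rfl

theorem finrank_Wspace_inf_ker_D1 {d i N : ℕ} (hN : 2 * N ≤ d * i) :
    (Module.finrank ℂ ↥(Wspace d i N ⊓ LinearMap.ker (D1 d).toLinearMap) : ℤ)
      = omegaCount d i N - omegaCount d i ((N : ℤ) - 1) := by
  cases N with
  | zero =>
    rw [inf_eq_left.2 (isSl2Grading_Wspace d i).le_ker_raise, finrank_Wspace]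
    simp [omegaCount_of_neg d i (show (-1 : ℤ) < 0 by norm_num)]
  | succ N =>
    have h := (isSl2Grading_Wspace d i).finrank_inf_ker_add_finrank hN
    rw [finrank_Wspace, finrank_Wspace] at h
    push_cast at h ⊢
    rw [add_sub_cancel_right]
    omega

theorem stmt0_general (d i j : ℕ) :
    (Module.finrank ℂ
        ↥(Wspace d i ((d * i - j) / 2) ⊓ LinearMap.ker (D1 d).toLinearMap) : ℤ)
      = omegaCount d i (((d * i - j) / 2 : ℕ) : ℤ)
        - omegaCount d i ((((d * i - j) / 2 : ℕ) : ℤ) - 1) :=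
  finrank_Wspace_inf_ker_D1 (by omega)

theorem stmt0 (d i j : ℕ) (hd : 1 ≤ d) (hj : j ≤ d * i) (hpar : (d * i - j) % 2 = 0) :
    (Module.finrank ℂ
        ↥(Wspace d i ((d * i - j) / 2) ⊓ LinearMap.ker (D1 d).toLinearMap) : ℤ)
      = omegaCount d i (((d * i - j) / 2 : ℕ) : ℤ)
        - omegaCount d i ((((d * i - j) / 2 : ℕ) : ℤ) - 1) :=
  stmt0_general d i j
end

section
/- Let R(t) ∈ ℂ[[t]] and let n ≥ 1, k ≥ 0 be integers. (a) If k < n, then Ψ_n(R(t)·(1−z·t^k)^{−1}) = ψ_{n−k}(R(t))·(1−z·t^{n−k})^{−1} in ℂ[[z,t]]. (b) If k > n and the constant term of R is 0, then Ψ_n(R(t)·(1−z·t^k)^{−1}) = 0. -/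
/-- ψ_n : ℂ[[t]] → ℂ[[z,t]]. -/
noncomputable def psi (n : ℕ) (F : PowerSeries ℂ) : MvPowerSeries (Fin 2) ℂ :=
  fun e => if e 1 < n ∧ e 1 ≤ n * e 0 then PowerSeries.coeff (n * e 0 - e 1) F else 0

/-- Ψ_n : ℂ[[z,t]] → ℂ[[z,t]], the coefficient of z^i t^j of Ψ_n(F) is the coefficient of
z^i t^(n·i−j) in F when n·i ≥ j, and 0 otherwise. -/
noncomputable def PsiCap (n : ℕ) (F : MvPowerSeries (Fin 2) ℂ) : MvPowerSeries (Fin 2) ℂ :=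
  fun e => if e 1 ≤ n * e 0 then
      MvPowerSeries.coeff (Finsupp.single 0 (e 0) + Finsupp.single 1 (n * e 0 - e 1)) F
    else 0

/-- The canonical embedding ℂ[[t]] → ℂ[[z,t]]. -/
noncomputable def embT (R : PowerSeries ℂ) : MvPowerSeries (Fin 2) ℂ :=
  fun e => if e 0 = 0 then PowerSeries.coeff (e 1) R else 0

/-! Both sides are identified through their products with `1 - z tᵏ`. Dividing `R(t)` by
`1 - z tᵏ` gives `∑ᵢ zⁱ t^(k i) R(t)`, whose `zⁱ tʲ` coefficient is `[t^(j - k i)] R`; `Ψ_n` turns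
this into `[t^((n - k) i - j)] R` for `j ≤ (n - k) i`, which is also the coefficient of
`ψ_(n-k)(R) / (1 - z t^(n-k))`. When `k > n`, the condition `k i ≤ n i - j` leaves only
`i = j = 0`, where the coefficient is the constant term of `R`. -/

open MvPowerSeries Finsupp

section Bivariate

variable {A : Type*} [Ring A]

/-- `∑ f i j zⁱ tʲ`, where the variable `0` is `z` and `1` is `t`. -/
def mkBivariate (f : ℕ → ℕ → A) : MvPowerSeries (Fin 2) A := fun e => f (e 0) (e 1)

lemma single_zero_add_single_one_eq (e : Fin 2 →₀ ℕ) : single 0 (e 0) + single 1 (e 1) = e := by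
  ext i; fin_cases i <;> simp

lemma ext_mkBivariate {F G : MvPowerSeries (Fin 2) A}
    (h : ∀ i j, coeff (single 0 i + single 1 j) F = coeff (single 0 i + single 1 j) G) : F = G :=
  MvPowerSeries.ext fun e => by rw [← single_zero_add_single_one_eq e]; exact h _ _

@[simp]
lemma coeff_mkBivariate (f : ℕ → ℕ → A) (i j : ℕ) :
    coeff (single 0 i + single 1 j) (mkBivariate f) = f i j := by
  simp [mkBivariate, coeff_apply]

lemma coeff_mul_one_sub_X_mul_X_pow (F : MvPowerSeries (Fin 2) A) (k i j : ℕ) :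
    coeff (single 0 i + single 1 j) (F * (1 - X 0 * X 1 ^ k)) =
      coeff (single 0 i + single 1 j) F -
        if 1 ≤ i ∧ k ≤ j then coeff (single 0 (i - 1) + single 1 (j - k)) F else 0 := by
  have hX : (X 0 * X 1 ^ k : MvPowerSeries (Fin 2) A) = monomial (single 0 1 + single 1 k) 1 := by
    rw [X_def, X_pow_eq, monomial_mul_monomial, one_mul]
  rw [mul_sub, mul_one, map_sub, hX, coeff_mul_monomial, mul_one]
  have hle : (single 0 1 + single 1 k : Fin 2 →₀ ℕ) ≤ single 0 i + single 1 j ↔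
      1 ≤ i ∧ k ≤ j := by
    simp [Finsupp.le_def, Fin.forall_fin_two]
  have hsub : single 0 i + single 1 j - (single 0 1 + single 1 k) =
      (single 0 (i - 1) + single 1 (j - k) : Fin 2 →₀ ℕ) := by
    ext l; fin_cases l <;> simp
  rw [hsub, if_congr hle rfl rfl]

end Bivariate

section

open PowerSeries (coeff)

@[simp]
lemma coeff_embT (R : PowerSeries ℂ) (i j : ℕ) :
    MvPowerSeries.coeff (single 0 i + single 1 j) (embT R) = if i = 0 then coeff j R else 0 := by
  simp [embT, coeff_apply]

@[simp]
lemma coeff_psi (m : ℕ) (R : PowerSeries ℂ) (i j : ℕ) :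
    MvPowerSeries.coeff (single 0 i + single 1 j) (psi m R) =
      if j < m ∧ j ≤ m * i then coeff (m * i - j) R else 0 := by
  simp [psi, coeff_apply]

@[simp]
lemma coeff_PsiCap (n : ℕ) (F : MvPowerSeries (Fin 2) ℂ) (i j : ℕ) :
    MvPowerSeries.coeff (single 0 i + single 1 j) (PsiCap n F) =
      if j ≤ n * i then MvPowerSeries.coeff (single 0 i + single 1 (n * i - j)) F else 0 := by
  simp [PsiCap, coeff_apply]

/-- `∑ᵢ zⁱ t^(k i) R(t) = R(t) / (1 - z tᵏ)`. -/
noncomputable def shiftedGeom (k : ℕ) (R : PowerSeries ℂ) : MvPowerSeries (Fin 2) ℂ :=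
  mkBivariate fun i j => if k * i ≤ j then coeff (j - k * i) R else 0

/-- `∑ᵢ zⁱ` times the part of degree `≤ m i` of `t^(m i) R(1/t)`. -/
noncomputable def reflectedGeom (m : ℕ) (R : PowerSeries ℂ) : MvPowerSeries (Fin 2) ℂ :=
  mkBivariate fun i j => if j ≤ m * i then coeff (m * i - j) R else 0

lemma shiftedGeom_mul_one_sub (k : ℕ) (R : PowerSeries ℂ) :
    shiftedGeom k R * (1 - X 0 * X 1 ^ k) = embT R := by
  refine ext_mkBivariate fun i j => ?_
  rw [coeff_mul_one_sub_X_mul_X_pow]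
  simp only [shiftedGeom, coeff_mkBivariate, coeff_embT]
  rcases i with _ | i
  · simp
  · rw [if_neg i.succ_ne_zero, sub_eq_zero, Nat.add_sub_cancel, mul_add_one, Nat.sub_sub,
      add_comm k]
    split_ifs <;> first | rfl | (exfalso; omega)

lemma reflectedGeom_mul_one_sub {m : ℕ} (hm : 0 < m) (R : PowerSeries ℂ) :
    reflectedGeom m R * (1 - X 0 * X 1 ^ m) = psi m R := by
  refine ext_mkBivariate fun i j => ?_
  rw [coeff_mul_one_sub_X_mul_X_pow]
  simp only [reflectedGeom, coeff_mkBivariate, coeff_psi]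
  by_cases hj : j < m
  · simp only [hj, true_and, not_le.mpr hj, and_false, if_false, sub_zero]
  rw [if_neg (fun h : j < m ∧ _ => hj h.1), sub_eq_zero]
  rcases i with _ | i
  · rw [if_neg (by omega), if_neg (by omega)]
  · rw [Nat.add_sub_cancel, mul_add_one, Nat.sub_sub_right _ (not_lt.mp hj)]
    split_ifs <;> first | rfl | (exfalso; omega)

lemma eq_mul_inv_one_sub_X_mul_X_pow {K : Type*} [Field K] {F G : MvPowerSeries (Fin 2) K}
    {k : ℕ} (h : G * (1 - X 0 * X 1 ^ k) = F) : F * (1 - X 0 * X 1 ^ k)⁻¹ = G :=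
  ((MvPowerSeries.eq_mul_inv_iff_mul_eq (by simp)).mpr h).symm

lemma PsiCap_shiftedGeom_of_le {n k : ℕ} (h : k ≤ n) (R : PowerSeries ℂ) :
    PsiCap n (shiftedGeom k R) = reflectedGeom (n - k) R := by
  refine ext_mkBivariate fun i j => ?_
  have hki : k * i ≤ n * i := Nat.mul_le_mul_right i h
  simp only [coeff_PsiCap, shiftedGeom, reflectedGeom, coeff_mkBivariate, Nat.sub_mul]
  generalize n * i = N, k * i = K at hki ⊢
  split_ifs <;> first | rfl | (congr 2; omega)

lemma PsiCap_shiftedGeom_of_lt {n k : ℕ} (h : n < k) {R : PowerSeries ℂ}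
    (hR : PowerSeries.constantCoeff R = 0) : PsiCap n (shiftedGeom k R) = 0 := by
  refine ext_mkBivariate fun i j => ?_
  simp only [coeff_PsiCap, shiftedGeom, coeff_mkBivariate, map_zero]
  rcases Nat.eq_zero_or_pos i with rfl | hi
  · split_ifs <;> simp_all
  · have hki : n * i < k * i := Nat.mul_lt_mul_of_pos_right h hi
    split_ifs <;> first | rfl | (exfalso; omega)

end

theorem stmt8_general (n k : ℕ) (R : PowerSeries ℂ) :
    (k < n →
      PsiCap n (embT R *
          (1 - (MvPowerSeries.X 0 : MvPowerSeries (Fin 2) ℂ) * (MvPowerSeries.X 1) ^ k)⁻¹)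
        = psi (n - k) R *
          (1 - (MvPowerSeries.X 0 : MvPowerSeries (Fin 2) ℂ) * (MvPowerSeries.X 1) ^ (n - k))⁻¹) ∧
    (n < k → PowerSeries.constantCoeff R = 0 →
      PsiCap n (embT R *
          (1 - (MvPowerSeries.X 0 : MvPowerSeries (Fin 2) ℂ) * (MvPowerSeries.X 1) ^ k)⁻¹)
        = 0) := by
  rw [eq_mul_inv_one_sub_X_mul_X_pow (shiftedGeom_mul_one_sub k R)]
  refine ⟨fun hk => ?_, fun hk hR => PsiCap_shiftedGeom_of_lt hk hR⟩
  rw [eq_mul_inv_one_sub_X_mul_X_pow (reflectedGeom_mul_one_sub (Nat.sub_pos_of_lt hk) R),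
    PsiCap_shiftedGeom_of_le hk.le]

theorem stmt8 (n k : ℕ) (hn : 1 ≤ n) (R : PowerSeries ℂ) :
    (k < n →
      PsiCap n (embT R *
          (1 - (MvPowerSeries.X 0 : MvPowerSeries (Fin 2) ℂ) * (MvPowerSeries.X 1) ^ k)⁻¹)
        = psi (n - k) R *
          (1 - (MvPowerSeries.X 0 : MvPowerSeries (Fin 2) ℂ) * (MvPowerSeries.X 1) ^ (n - k))⁻¹) ∧
    (n < k → PowerSeries.constantCoeff R = 0 →
      PsiCap n (embT R *
          (1 - (MvPowerSeries.X 0 : MvPowerSeries (Fin 2) ℂ) * (MvPowerSeries.X 1) ^ k)⁻¹)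
        = 0) :=
  stmt8_general n k R
end

section
/- Let n ≥ 1, let R(t) ∈ ℂ[[t]], let m ≥ 1 and let k_1,…,k_m be positive integers. Then ψ_n(R(t)·∏_{i=1}^{m}(1−t^{k_i})^{−1}) · ∏_{i=1}^{m}(1−z^{k_i}) = ψ_n(R(t)·Q_n(t^{k_1})·Q_n(t^{k_2})⋯Q_n(t^{k_m})) in ℂ[[z,t]], where Q_n(u) = 1 + u + u² + ⋯ + u^{n−1}. -/
open PowerSeries in
theorem inv_one_sub_X_pow_mul_one_sub_X_pow_mul {K : Type*} [Field K] (n : ℕ) {k : ℕ}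
    (hk : k ≠ 0) :
    (1 - (X : K⟦X⟧) ^ k)⁻¹ * (1 - X ^ (n * k)) = ∑ s ∈ Finset.range n, X ^ (k * s) := by
  have hgeom : (1 - (X : K⟦X⟧) ^ k) * ∑ s ∈ Finset.range n, X ^ (k * s) = 1 - X ^ (n * k) := by
    simpa [← pow_mul, mul_comm n k] using mul_neg_geom_sum ((X : K⟦X⟧) ^ k) n
  rw [← hgeom, ← mul_assoc, PowerSeries.inv_mul_cancel _ (by simp [hk]), one_mul]

theorem coeff_psi_s9 (n : ℕ) (F : PowerSeries ℂ) (e : Fin 2 →₀ ℕ) :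
    MvPowerSeries.coeff e (psi n F) =
      if e 1 < n ∧ e 1 ≤ n * e 0 then PowerSeries.coeff (n * e 0 - e 1) F else 0 := rfl

theorem psi_sub (n : ℕ) (F G : PowerSeries ℂ) : psi n (F - G) = psi n F - psi n G := by
  ext e
  simp only [map_sub, coeff_psi_s9]
  split_ifs <;> simp

theorem psi_X_pow_mul (n k : ℕ) (F : PowerSeries ℂ) :
    psi n (PowerSeries.X ^ (n * k) * F) = psi n F * MvPowerSeries.X 0 ^ k := by
  ext e
  rw [MvPowerSeries.X_pow_eq, MvPowerSeries.coeff_mul_monomial, coeff_psi_s9, coeff_psi_s9,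
    PowerSeries.coeff_X_pow_mul']
  simp only [Finsupp.single_le_iff, Finsupp.tsub_apply, Finsupp.single_eq_same, mul_one,
    Finsupp.single_eq_of_ne (show (1 : Fin 2) ≠ 0 by decide), Nat.sub_zero, Nat.mul_sub]
  by_cases hke : k ≤ e 0
  · have := Nat.mul_le_mul_left n hke
    simp only [if_pos hke]
    generalize n * e 0 = A at *
    generalize n * k = K at *
    split_ifs <;> first | rfl | omega | rw [Nat.sub_right_comm]
  -- otherwise `n * e 0 - e 1 < n * e 0 + n ≤ n * k`, so the left side vanishes as well
  · have := Nat.mul_le_mul_left n (Nat.succ_le_of_lt (Nat.lt_of_not_le hke))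
    simp only [if_neg hke, Nat.mul_succ] at this ⊢
    split_ifs <;> first | rfl | omega

theorem psi_mul_one_sub_X_pow (n k : ℕ) (F : PowerSeries ℂ) :
    psi n (F * (1 - PowerSeries.X ^ (n * k))) = psi n F * (1 - MvPowerSeries.X 0 ^ k) := by
  rw [mul_one_sub, mul_comm, psi_sub, psi_X_pow_mul, mul_one_sub]

theorem psi_mul_prod_one_sub_X_pow {ι : Type*} (n : ℕ) (F : PowerSeries ℂ) (s : Finset ι)
    (k : ι → ℕ) :
    psi n (F * ∏ i ∈ s, (1 - PowerSeries.X ^ (n * k i))) =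
      psi n F * ∏ i ∈ s, (1 - MvPowerSeries.X 0 ^ k i) := by
  classical
  induction s using Finset.induction_on generalizing F with
  | empty => simp
  | insert a s ha ih =>
    rw [Finset.prod_insert ha, Finset.prod_insert ha, ← mul_assoc, ih, psi_mul_one_sub_X_pow,
      mul_assoc]

theorem stmt9_general (n : ℕ) (R : PowerSeries ℂ) (m : ℕ)
    (k : Fin m → ℕ) (hk : ∀ i, 1 ≤ k i) :
    psi n (R * ∏ i, (1 - (PowerSeries.X : PowerSeries ℂ) ^ (k i))⁻¹) *
        ∏ i, (1 - (MvPowerSeries.X 0 : MvPowerSeries (Fin 2) ℂ) ^ (k i))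
      = psi n (R * ∏ i, ∑ s ∈ Finset.range n, (PowerSeries.X : PowerSeries ℂ) ^ (k i * s)) := by
  rw [← psi_mul_prod_one_sub_X_pow, mul_assoc, ← Finset.prod_mul_distrib]
  congr 2
  exact Finset.prod_congr rfl fun i _ =>
    inv_one_sub_X_pow_mul_one_sub_X_pow_mul n (Nat.one_le_iff_ne_zero.mp (hk i))

theorem stmt9 (n : ℕ) (hn : 1 ≤ n) (R : PowerSeries ℂ) (m : ℕ) (hm : 1 ≤ m)
    (k : Fin m → ℕ) (hk : ∀ i, 1 ≤ k i) :
    psi n (R * ∏ i, (1 - (PowerSeries.X : PowerSeries ℂ) ^ (k i))⁻¹) *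
        ∏ i, (1 - (MvPowerSeries.X 0 : MvPowerSeries (Fin 2) ℂ) ^ (k i))
      = psi n (R * ∏ i, ∑ s ∈ Finset.range n, (PowerSeries.X : PowerSeries ℂ) ^ (k i * s)) :=
  stmt9_general n R m k hk
end
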